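/- arXiv:2303.11341 — 2 statements merged into one kernel-verified Lean document; each statement's English description precedes it below -/
import Mathlib

section
/- Let H, a, C, f, s be positive reals with s ≥ 1 and suppose H/(a·C·t)·(1 − exp(−f·t)) ≤ 1 for all t in (0, T]. Define p_d(t) = 1 − (1 − (H/(a·C·t))·(1 − exp(−f·t)))^s. Then for 0 < t ≤ T, p_d(t) ≥ p_d(T). -/
open Real Set

/-- `1 - exp (-f t)` is concave and vanishes at `0`, so its slope from the origin decreases. -/
theorem antitoneOn_one_sub_exp_neg_mul_div (f : ℝ) :
    AntitoneOn (fun t => (1 - exp (-f * t)) / t) (Ioi 0) := by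
  have hconv : ConvexOn ℝ univ (fun t : ℝ => exp (-f * t)) := by
    simpa [Function.comp_def] using convexOn_exp.comp_linearMap (LinearMap.mulLeft ℝ (-f))
  intro x hx y hy hxy
  have := hconv.secant_mono (mem_univ 0) (mem_univ x) (mem_univ y) (ne_of_gt hx)
    (ne_of_gt hy) hxy
  simp only [mul_zero, exp_zero, sub_zero] at this
  simp only [← neg_sub (exp _), neg_div]
  exact neg_le_neg this

theorem one_sub_one_sub_rpow_le_of_le {x y s : ℝ} (hs : 0 ≤ s) (hxy : x ≤ y) (hy : y ≤ 1) :
    1 - (1 - x) ^ s ≤ 1 - (1 - y) ^ s :=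
  sub_le_sub_left (rpow_le_rpow (by linarith) (by linarith) hs) 1

theorem stmt_2_general (H a C f s T : ℝ) (hH : 0 < H) (ha : 0 < a) (hC : 0 < C)
    (hs : 1 ≤ s)
    (hle : ∀ t ∈ Set.Ioc (0 : ℝ) T, H / (a * C * t) * (1 - Real.exp (-f * t)) ≤ 1)
    (p_d : ℝ → ℝ)
    (hp_d : ∀ t, p_d t = 1 - (1 - H / (a * C * t) * (1 - Real.exp (-f * t))) ^ s)
    (t : ℝ) (ht : 0 < t) (htT : t ≤ T) :
    p_d t ≥ p_d T := by
  have hrate : ∀ u, H / (a * C * u) * (1 - exp (-f * u))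
      = H / (a * C) * ((1 - exp (-f * u)) / u) := by
    intro u
    ring
  have hrate_le : H / (a * C * T) * (1 - exp (-f * T)) ≤ H / (a * C * t) * (1 - exp (-f * t)) := by
    rw [hrate, hrate]
    exact mul_le_mul_of_nonneg_left
      (antitoneOn_one_sub_exp_neg_mul_div f ht (ht.trans_le htT) htT) (by positivity)
  rw [hp_d, hp_d]
  exact one_sub_one_sub_rpow_le_of_le (by linarith) hrate_le (hle t ⟨ht, htT⟩)

theorem stmt_2 (H a C f s T : ℝ) (hH : 0 < H) (ha : 0 < a) (hC : 0 < C)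
    (hf : 0 < f) (hs : 1 ≤ s) (hT : 0 < T)
    (hle : ∀ t ∈ Set.Ioc (0 : ℝ) T, H / (a * C * t) * (1 - Real.exp (-f * t)) ≤ 1)
    (p_d : ℝ → ℝ)
    (hp_d : ∀ t, p_d t = 1 - (1 - H / (a * C * t) * (1 - Real.exp (-f * t))) ^ s)
    (t : ℝ) (ht : 0 < t) (htT : t ≤ T) :
    p_d t ≥ p_d T :=
  stmt_2_general H a C f s T hH ha hC hs hle p_d hp_d t ht htT
end

section
/- Let 0 < b < 1 and p = 0.9, and set s = log(1−p)/log(1−b). Then for all k ≥ 1 (with b/k < 1), p_d(k) = 1 − (1 − b/k)^{ks} satisfies 1 − (1 − b/k)^{ks} ≥ 1 − e^{−b·s} ≥ 1 − (1−p)^{b/(−log(1−b))}. -/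
theorem stmt_9 (b : ℝ) (hb0 : 0 < b) (hb1 : b < 1) (p s : ℝ) (hp : p = 0.9)
    (hs : s = Real.log (1 - p) / Real.log (1 - b))
    (k : ℝ) (hk : 1 ≤ k) (hbk : b / k < 1) :
    1 - (1 - b / k) ^ (k * s) ≥ 1 - Real.exp (-b * s) ∧
      1 - Real.exp (-b * s) ≥ 1 - (1 - p) ^ (b / (-Real.log (1 - b))) := by
  have hk0 : (0:ℝ) < k := lt_of_lt_of_le one_pos hk
  have hlb_neg : Real.log (1 - b) < 0 := by
    apply Real.log_neg <;> linarith
  have hlp_neg : Real.log (1 - p) < 0 := by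
    apply Real.log_neg <;> rw [hp] <;> norm_num
  have hs_pos : 0 < s := by
    rw [hs]; exact div_pos_of_neg_of_neg hlp_neg hlb_neg
  have hks : 0 ≤ k * s := le_of_lt (mul_pos hk0 hs_pos)
  constructor
  · have h1 : (0:ℝ) ≤ 1 - b / k := by
      have : 0 < b / k := div_pos hb0 hk0
      linarith
    have h2 : 1 - b / k ≤ Real.exp (-(b / k)) := by
      have := Real.add_one_le_exp (-(b / k)); linarith
    have h3 : (1 - b / k) ^ (k * s) ≤ (Real.exp (-(b / k))) ^ (k * s) :=
      Real.rpow_le_rpow h1 h2 hks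
    have h4 : (Real.exp (-(b / k))) ^ (k * s) = Real.exp (-b * s) := by
      rw [← Real.exp_mul]
      congr 1
      field_simp
    rw [h4] at h3
    linarith
  · have heq : (1 - p) ^ (b / (-Real.log (1 - b))) = Real.exp (-b * s) := by
      rw [Real.rpow_def_of_pos (by rw [hp]; norm_num : (0:ℝ) < 1 - p)]
      congr 1
      rw [hs]
      field_simp
    rw [heq]
end
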